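/- Under (A1) and (A2), a function φ ∈ B_W(S) is a fixed point of T (i.e., Tφ(i) = φ(i) for all i ∈ S) if and only if φ satisfies the dynamic programming inequalities with bilateral constraints (3.1): ψ_2(i) ≤ φ(i) ≤ ψ_1(i) for all i; αφ(i) − H_α(i,φ) = 0 whenever ψ_2(i) < φ(i) < ψ_1(i); αφ(i) − H_α(i,φ) ≥ 0 whenever φ(i) = ψ_2(i); αφ(i) − H_α(i,φ) ≤ 0 whenever φ(i) = ψ_1(i). -/

import Mathlib

open MeasureTheory Filter Topology

noncomputable section

variable {U V : Type}

/-- Integrated reward rate `r̃(i,μ,ν)`. -/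
def rT [MeasurableSpace U] [MeasurableSpace V] (r : ℕ → U → V → ℝ) (i : ℕ)
    (μ : ProbabilityMeasure U) (ν : ProbabilityMeasure V) : ℝ :=
  ∫ b, (∫ a, r i a b ∂(μ : Measure U)) ∂(ν : Measure V)

/-- Integrated transition rate `q̃(j|i,μ,ν)`. -/
def qT [MeasurableSpace U] [MeasurableSpace V] (q : ℕ → ℕ → U → V → ℝ) (i j : ℕ)
    (μ : ProbabilityMeasure U) (ν : ProbabilityMeasure V) : ℝ :=
  ∫ b, (∫ a, q i j a b ∂(μ : Measure U)) ∂(ν : Measure V)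

/-- `p̃(j|i,μ,ν) = q̃(j|i,μ,ν)/(q(i)+1) + δ_{ij}`. -/
def pT [MeasurableSpace U] [MeasurableSpace V] (q : ℕ → ℕ → U → V → ℝ) (qb : ℕ → ℝ)
    (i j : ℕ) (μ : ProbabilityMeasure U) (ν : ProbabilityMeasure V) : ℝ :=
  qT q i j μ ν / (qb i + 1) + (if i = j then (1 : ℝ) else 0)

/-- `H_α(i,φ)`. -/
def Hop [MeasurableSpace U] [MeasurableSpace V] (q : ℕ → ℕ → U → V → ℝ)
    (r : ℕ → U → V → ℝ) (φ : ℕ → ℝ) (i : ℕ) : ℝ :=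
  ⨅ μ : ProbabilityMeasure U, ⨆ ν : ProbabilityMeasure V,
    (rT r i μ ν + ∑' j, qT q i j μ ν * φ j)

/-- `I_α(i,φ)`. -/
def Iop [MeasurableSpace U] [MeasurableSpace V] (q : ℕ → ℕ → U → V → ℝ)
    (r : ℕ → U → V → ℝ) (qb : ℕ → ℝ) (α : ℝ) (φ : ℕ → ℝ) (i : ℕ) : ℝ :=
  ⨅ μ : ProbabilityMeasure U, ⨆ ν : ProbabilityMeasure V,
    (rT r i μ ν / (α + qb i + 1) +
      ((qb i + 1) / (α + qb i + 1)) * ∑' j, pT q qb i j μ ν * φ j)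

/-- The operator `T`. -/
def Tmap [MeasurableSpace U] [MeasurableSpace V] (q : ℕ → ℕ → U → V → ℝ)
    (r : ℕ → U → V → ℝ) (qb : ℕ → ℝ) (α : ℝ) (ψ₁ ψ₂ : ℕ → ℝ)
    (φ : ℕ → ℝ) (i : ℕ) : ℝ :=
  min (max (Iop q r qb α φ i) (ψ₂ i)) (ψ₁ i)

/-- The space `B_W(S)` of nonnegative functions with finite weighted sup-norm. -/
def BW (W : ℕ → ℝ) : Set (ℕ → ℝ) :=
  {f | (∀ i, 0 ≤ f i) ∧ BddAbove (Set.range fun i => f i / W i)}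

/-- The weighted sup-norm `‖f‖_W`. -/
def normW (W : ℕ → ℝ) (f : ℕ → ℝ) : ℝ := ⨆ i, f i / W i

/-- Basic properties of the transition rates: nonnegativity off the diagonal,
conservativeness and stability (`qb i` is the least upper bound `q(i)`). -/
structure RateHyps (q : ℕ → ℕ → U → V → ℝ) (qb : ℕ → ℝ) : Prop where
  off_nonneg : ∀ i j a b, j ≠ i → 0 ≤ q i j a b
  summable : ∀ i a b, Summable fun j => q i j a b
  conservative : ∀ i a b, ∑' j, q i j a b = 0
  stable : ∀ i, IsLUB (Set.range fun ab : U × V =>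
    ∑' j, if j = i then (0 : ℝ) else q i j ab.1 ab.2) (qb i)

/-- Assumption (A1) (with `w 0, …, w (N-1)` playing the role of `w_1, …, w_N`,
and `W = w_1 + ⋯ + w_N`). -/
structure A1Hyps (q : ℕ → ℕ → U → V → ℝ) (qb : ℕ → ℝ) (N : ℕ) (w : ℕ → ℕ → ℝ)
    (c : ℝ) (W : ℕ → ℝ) : Prop where
  N_pos : 0 < N
  c_pos : 0 < c
  w_nonneg : ∀ n i, 0 ≤ w n i
  w_summable : ∀ n, n < N → ∀ i a b, Summable fun j => q i j a b * w n j
  w_rec : ∀ n, n + 1 < N → ∀ i a b, ∑' j, q i j a b * w n j ≤ w (n + 1) i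
  w_last : ∀ i a b, ∑' j, q i j a b * w (N - 1) j ≤ 0
  qb_le : ∀ i, qb i ≤ c * W i
  W_def : ∀ i, W i = ∑ n ∈ Finset.range N, w n i
  W_pos : ∀ i, 0 < W i

/-- Assumption (A2), parts (ii)-(iv) concerning `r` and `q`
(compactness of `U` and `V` is imposed through instance arguments). -/
structure A2Hyps [TopologicalSpace U] [TopologicalSpace V] (q : ℕ → ℕ → U → V → ℝ)
    (r : ℕ → U → V → ℝ) (W : ℕ → ℝ) (M : ℝ) : Prop where
  r_nonneg : ∀ i a b, 0 ≤ r i a b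
  r_cont : ∀ i, Continuous fun ab : U × V => r i ab.1 ab.2
  q_cont : ∀ i j, Continuous fun ab : U × V => q i j ab.1 ab.2
  qW_cont : ∀ i, Continuous fun ab : U × V => ∑' j, q i j ab.1 ab.2 * W j
  r_le : ∀ i a b, r i a b ≤ M * W i

/-- Assumption (A2), part (iv) concerning the stopped pay-off functions. -/
structure PsiHyps (ψ₁ ψ₂ : ℕ → ℝ) (W : ℕ → ℝ) (M : ℝ) : Prop where
  ψ₂_nonneg : ∀ i, 0 ≤ ψ₂ i
  ψ₁_le : ∀ i, ψ₁ i ≤ M * W i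
  ψ₂_lt_ψ₁ : ∀ i, ψ₂ i < ψ₁ i

end

/-- The system (3.1) of dynamic programming inequalities, in terms of `H_α`. -/
def DPI_H {U V : Type} [MeasurableSpace U] [MeasurableSpace V]
    (q : ℕ → ℕ → U → V → ℝ) (r : ℕ → U → V → ℝ) (α : ℝ) (ψ₁ ψ₂ : ℕ → ℝ)
    (φ : ℕ → ℝ) : Prop :=
  (∀ i, ψ₂ i ≤ φ i ∧ φ i ≤ ψ₁ i) ∧
  (∀ i, ψ₂ i < φ i → φ i < ψ₁ i → α * φ i - Hop q r φ i = 0) ∧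
  (∀ i, φ i = ψ₂ i → 0 ≤ α * φ i - Hop q r φ i) ∧
  (∀ i, φ i = ψ₁ i → α * φ i - Hop q r φ i ≤ 0)

/-!
Since `p̃ = q̃ / (q(i) + 1) + δ`, the bracket inside `I_α(i, φ)` is the image of the bracket
inside `H_α(i, φ)` under the increasing affine map `x ↦ (x + (q(i) + 1) φ(i)) / (α + q(i) + 1)`.
That bracket is bounded in `(μ, ν)`: from below by `-q(i) φ(i)`, and from above because
`φ ≤ K W` and `∑_{j ≠ i} q(j|i,a,b) W(j)` is continuous on the compact space `U × V`. So the affine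
map commutes with `inf sup`, which gives
`I_α(i, φ) = (H_α(i, φ) + (q(i) + 1) φ(i)) / (α + q(i) + 1)`. Consequently `I_α(i, φ) ≤ φ(i)` iff
`α φ(i) - H_α(i, φ) ≥ 0`, and symmetrically, so `min (max I_α ψ₂) ψ₁ = φ` unpacks into (3.1).
-/

open Function

instance {U : Type} [MeasurableSpace U] [Nonempty U] : Nonempty (ProbabilityMeasure U) :=
  ⟨⟨Measure.dirac (Classical.arbitrary U), inferInstance⟩⟩

theorem integrable_slice {U V : Type} [MetricSpace U] [CompactSpace U] [MeasurableSpace U]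
    [BorelSpace U] [TopologicalSpace V] {h : U → V → ℝ} (hh : Continuous (uncurry h)) (b : V)
    (μ : ProbabilityMeasure U) : Integrable (fun a => h a b) (μ : Measure U) :=
  (hh.comp (continuous_id.prodMk continuous_const)).integrable_of_hasCompactSupport
    (.of_compactSpace _)

section MixedExtension

variable {U V : Type} [MeasurableSpace U] [MeasurableSpace V]

/-- `rT r i` and `qT q i j` are `mixedExt (r i)` and `mixedExt (q i j)` by definition. -/
noncomputable def mixedExt (h : U → V → ℝ) (μ : ProbabilityMeasure U)
    (ν : ProbabilityMeasure V) : ℝ :=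
  ∫ b, ∫ a, h a b ∂(μ : Measure U) ∂(ν : Measure V)

theorem mixedExt_nonneg {h : U → V → ℝ} (h0 : ∀ a b, 0 ≤ h a b) (μ : ProbabilityMeasure U)
    (ν : ProbabilityMeasure V) : 0 ≤ mixedExt h μ ν :=
  integral_nonneg fun b => integral_nonneg fun a => h0 a b

@[simp]
theorem mixedExt_const (C : ℝ) (μ : ProbabilityMeasure U) (ν : ProbabilityMeasure V) :
    mixedExt (fun _ _ => C) μ ν = C := by
  simp [mixedExt]

theorem mixedExt_mul_const (h : U → V → ℝ) (C : ℝ) (μ : ProbabilityMeasure U)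
    (ν : ProbabilityMeasure V) : mixedExt (fun a b => h a b * C) μ ν = mixedExt h μ ν * C := by
  simp [mixedExt, integral_mul_const]

variable [MetricSpace U] [CompactSpace U] [BorelSpace U]
  [MetricSpace V] [CompactSpace V] [BorelSpace V]

theorem integrable_integral_slice {h : U → V → ℝ} (hh : Continuous (uncurry h))
    (μ : ProbabilityMeasure U) (ν : ProbabilityMeasure V) :
    Integrable (fun b => ∫ a, h a b ∂(μ : Measure U)) (ν : Measure V) := by
  have hcont := continuous_parametric_integral_of_continuous (μ := (μ : Measure U))
    (f := fun b a => h a b) (hh.comp continuous_swap) isCompact_univ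
  simp only [Measure.restrict_univ] at hcont
  exact hcont.integrable_of_hasCompactSupport (.of_compactSpace _)

theorem mixedExt_mono {h g : U → V → ℝ} (hh : Continuous (uncurry h))
    (hg : Continuous (uncurry g)) (hle : ∀ a b, h a b ≤ g a b) (μ : ProbabilityMeasure U)
    (ν : ProbabilityMeasure V) : mixedExt h μ ν ≤ mixedExt g μ ν :=
  integral_mono (integrable_integral_slice hh μ ν) (integrable_integral_slice hg μ ν) fun b =>
    integral_mono (integrable_slice hh b μ) (integrable_slice hg b μ) fun a => hle a b

theorem mixedExt_le_of_le {h : U → V → ℝ} (hh : Continuous (uncurry h)) {C : ℝ}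
    (hle : ∀ a b, h a b ≤ C) (μ : ProbabilityMeasure U) (ν : ProbabilityMeasure V) :
    mixedExt h μ ν ≤ C := by
  simpa using mixedExt_mono hh continuous_const hle μ ν

theorem le_mixedExt_of_le {h : U → V → ℝ} (hh : Continuous (uncurry h)) {C : ℝ}
    (hle : ∀ a b, C ≤ h a b) (μ : ProbabilityMeasure U) (ν : ProbabilityMeasure V) :
    C ≤ mixedExt h μ ν := by
  simpa using mixedExt_mono continuous_const hh hle μ ν

theorem mixedExt_finsetSum {ι : Type*} (F : Finset ι) {h : ι → U → V → ℝ}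
    (hh : ∀ j ∈ F, Continuous (uncurry (h j))) (μ : ProbabilityMeasure U)
    (ν : ProbabilityMeasure V) :
    mixedExt (fun a b => ∑ j ∈ F, h j a b) μ ν = ∑ j ∈ F, mixedExt (h j) μ ν := by
  unfold mixedExt
  rw [← integral_finsetSum F fun j hj => integrable_integral_slice (hh j hj) μ ν]
  congr 1 with b
  exact integral_finsetSum F fun j hj => integrable_slice (hh j hj) b μ

end MixedExtension

section Series

variable {ι : Type*} [DecidableEq ι]

theorem sum_erase_le_tsum_sub {f : ι → ℝ} {i : ι} (hf : Summable f) (hoff : ∀ j ≠ i, 0 ≤ f j)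
    (F : Finset ι) : ∑ j ∈ F.erase i, f j ≤ ∑' j, f j - f i := by
  have hle := hf.sum_le_tsum (insert i F) fun j hj =>
    hoff j fun h => hj (h ▸ F.mem_insert_self j)
  rw [← Finset.sum_erase_add _ _ (F.mem_insert_self i), Finset.erase_insert_eq_erase] at hle
  linarith

theorem summable_mul_and_tsum_mem_Icc {p φ W : ι → ℝ} {i : ι} {K C L : ℝ}
    (hoff : ∀ j ≠ i, 0 ≤ p j) (hdiag : p i ∈ Set.Icc (-L) 0) (hφ0 : ∀ j, 0 ≤ φ j)
    (hφK : ∀ j, φ j ≤ K * W j) (hK : 0 ≤ K)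
    (hpart : ∀ F : Finset ι, ∑ j ∈ F.erase i, p j * W j ≤ C) :
    Summable (fun j => p j * φ j) ∧ ∑' j, p j * φ j ∈ Set.Icc (-L * φ i) (K * C) := by
  set g : ι → ℝ := fun j => if j = i then 0 else p j * φ j
  have hg0 : 0 ≤ g := fun j => by
    by_cases hj : j = i
    · simp [g, hj]
    · simpa [g, hj] using mul_nonneg (hoff j hj) (hφ0 j)
  have hgpart : ∀ F : Finset ι, ∑ j ∈ F, g j ≤ K * C := fun F => calc
    ∑ j ∈ F, g j = ∑ j ∈ F.erase i, p j * φ j := by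
      rw [← Finset.sum_erase F (f := g) (a := i) (by simp [g])]
      exact Finset.sum_congr rfl fun j hj => by simp [g, Finset.ne_of_mem_erase hj]
    _ ≤ ∑ j ∈ F.erase i, K * (p j * W j) := Finset.sum_le_sum fun j hj => by
      nlinarith [hoff j (Finset.ne_of_mem_erase hj), hφK j]
    _ ≤ K * C := by rw [← Finset.mul_sum]; exact mul_le_mul_of_nonneg_left (hpart F) hK
  have hg : Summable g := summable_of_sum_le hg0 hgpart
  have hsum : Summable (fun j => p j * φ j) :=
    (hg.update i (p i * φ i)).congr fun j => by by_cases hj : j = i <;> simp [g, hj]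
  have htsum : ∑' j, p j * φ j = p i * φ i + ∑' j, g j := hsum.tsum_eq_add_tsum_ite i
  refine ⟨hsum, ?_⟩
  rw [htsum]
  have hdiag_mul : p i * φ i ∈ Set.Icc (-L * φ i) 0 :=
    ⟨mul_le_mul_of_nonneg_right hdiag.1 (hφ0 i), mul_nonpos_of_nonpos_of_nonneg hdiag.2 (hφ0 i)⟩
  have htsum_le : ∑' j, g j ≤ K * C := Real.tsum_le_of_sum_le hg0 hgpart
  have htsum_nonneg : 0 ≤ ∑' j, g j := tsum_nonneg fun j => hg0 j
  constructor <;> linarith [hdiag_mul.1, hdiag_mul.2]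

end Series

theorem min_max_eq_iff {α : Type*} [LinearOrder α] {I lo hi x : α} (h : lo < hi) :
    min (max I lo) hi = x ↔ (lo ≤ x ∧ x ≤ hi) ∧ (lo < x → x < hi → I = x) ∧
      (x = lo → I ≤ x) ∧ (x = hi → x ≤ I) := by
  constructor
  · rintro rfl
    refine ⟨⟨?_, ?_⟩, ?_, ?_, ?_⟩ <;> intros <;> simp only [min_def, max_def] at * <;>
      split_ifs at * <;> order
  · rintro ⟨⟨hlo, hhi⟩, hmid, hbot, htop⟩
    rcases hlo.lt_or_eq with hlo | rfl
    · rcases hhi.lt_or_eq with hhi | rfl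
      · rw [hmid hlo hhi, max_eq_left hlo.le, min_eq_left hhi.le]
      · rw [max_eq_left (h.le.trans (htop rfl)), min_eq_right (htop rfl)]
    · rw [max_eq_right (hbot rfl), min_eq_left h.le]

theorem iInf_iSup_comp_eq {ι κ α β : Type*} [Nonempty ι] [Nonempty κ]
    [ConditionallyCompleteLinearOrder α] [TopologicalSpace α] [OrderTopology α]
    [ConditionallyCompleteLinearOrder β] [TopologicalSpace β] [OrderClosedTopology β]
    {f : ι → κ → α} {g : α → β} (hg : Monotone g) (hgc : Continuous g) {L B : α}
    (hf : ∀ x y, f x y ∈ Set.Icc L B) :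
    ⨅ x, ⨆ y, g (f x y) = g (⨅ x, ⨆ y, f x y) := by
  have hbdd : ∀ x, BddAbove (Set.range (f x)) := fun x =>
    ⟨B, by rintro _ ⟨y, rfl⟩; exact (hf x y).2⟩
  have hlow : ∀ x, L ≤ ⨆ y, f x y := fun x =>
    (hf x (Classical.arbitrary κ)).1.trans (le_ciSup (hbdd x) _)
  rw [hg.map_ciInf_of_continuousAt hgc.continuousAt ⟨L, by rintro _ ⟨x, rfl⟩; exact hlow x⟩]
  exact iInf_congr fun x => (hg.map_ciSup_of_continuousAt hgc.continuousAt (hbdd x)).symm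

theorem exists_le_mul_of_mem_BW {W φ : ℕ → ℝ} (hW : ∀ i, 0 < W i) (hφ : φ ∈ BW W) :
    ∃ K, 0 ≤ K ∧ ∀ j, φ j ≤ K * W j := by
  obtain ⟨hφ0, K, hK⟩ := hφ
  exact ⟨K, (div_nonneg (hφ0 0) (hW 0).le).trans (hK ⟨0, rfl⟩),
    fun j => (div_le_iff₀ (hW j)).1 (hK ⟨j, rfl⟩)⟩

theorem tsum_pT_mul {U V : Type} [MeasurableSpace U] [MeasurableSpace V]
    {q : ℕ → ℕ → U → V → ℝ} {qb φ : ℕ → ℝ} {i : ℕ} {μ : ProbabilityMeasure U}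
    {ν : ProbabilityMeasure V} (h : Summable fun j => qT q i j μ ν * φ j) :
    ∑' j, pT q qb i j μ ν * φ j = (∑' j, qT q i j μ ν * φ j) / (qb i + 1) + φ i := by
  have hsplit : ∀ j, pT q qb i j μ ν * φ j =
      qT q i j μ ν * φ j / (qb i + 1) + if j = i then φ i else 0 := fun j => by
    by_cases hj : j = i
    · subst hj; simp only [pT, if_true]; ring
    · simp only [pT, hj, Ne.symm hj, if_false]; ring
  rw [tsum_congr hsplit, (h.div_const _).tsum_add (hasSum_ite_eq i (φ i)).summable,
    tsum_div_const, (hasSum_ite_eq i (φ i)).tsum_eq]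

namespace RateHyps

variable {U V : Type} {q : ℕ → ℕ → U → V → ℝ} {qb : ℕ → ℝ}

theorem offDiag_tsum_nonneg (h : RateHyps q qb) (i : ℕ) (a : U) (b : V) :
    0 ≤ ∑' j, if j = i then (0 : ℝ) else q i j a b :=
  tsum_nonneg fun j => by
    split_ifs with hj
    exacts [le_rfl, h.off_nonneg i j a b hj]

theorem qb_nonneg [Nonempty U] [Nonempty V] (h : RateHyps q qb) (i : ℕ) : 0 ≤ qb i :=
  (h.offDiag_tsum_nonneg i (Classical.arbitrary U) (Classical.arbitrary V)).trans
    ((h.stable i).1 ⟨(_, _), rfl⟩)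

theorem diag_eq (h : RateHyps q qb) (i : ℕ) (a : U) (b : V) :
    q i i a b = -∑' j, if j = i then (0 : ℝ) else q i j a b := by
  have hsplit := (h.summable i a b).tsum_eq_add_tsum_ite i
  rw [h.conservative i a b] at hsplit
  linarith

theorem diag_mem_Icc (h : RateHyps q qb) (i : ℕ) (a : U) (b : V) :
    q i i a b ∈ Set.Icc (-qb i) 0 := by
  rw [h.diag_eq i a b]
  exact ⟨neg_le_neg ((h.stable i).1 ⟨(a, b), rfl⟩), neg_nonpos.2 (h.offDiag_tsum_nonneg i a b)⟩

end RateHyps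

theorem A1Hyps.summable_mul_W {U V : Type} {q : ℕ → ℕ → U → V → ℝ} {qb : ℕ → ℝ} {N : ℕ}
    {w : ℕ → ℕ → ℝ} {c : ℝ} {W : ℕ → ℝ} (h : A1Hyps q qb N w c W) (i : ℕ) (a : U) (b : V) :
    Summable fun j => q i j a b * W j := by
  simp only [h.W_def, Finset.mul_sum]
  exact summable_sum fun n hn => h.w_summable n (Finset.mem_range.mp hn) i a b

section BellmanOperator

variable {U V : Type} [MetricSpace U] [CompactSpace U] [MeasurableSpace U] [BorelSpace U]
  [MetricSpace V] [CompactSpace V] [MeasurableSpace V] [BorelSpace V]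
  {q : ℕ → ℕ → U → V → ℝ} {r : ℕ → U → V → ℝ} {qb : ℕ → ℝ} {N : ℕ} {w : ℕ → ℕ → ℝ}
  {c : ℝ} {W : ℕ → ℝ} {M : ℝ}

theorem exists_sum_erase_qT_mul_W_le (hrate : RateHyps q qb) (hA1 : A1Hyps q qb N w c W)
    (hA2 : A2Hyps q r W M) (i : ℕ) :
    ∃ C, ∀ μ ν (F : Finset ℕ), ∑ j ∈ F.erase i, qT q i j μ ν * W j ≤ C := by
  obtain ⟨C, hC⟩ := (isCompact_range
    ((hA2.qW_cont i).sub ((hA2.q_cont i i).mul continuous_const))).bddAbove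
  refine ⟨C, fun μ ν F => ?_⟩
  -- Bounding finite partial sums avoids exchanging the series with the integrals.
  have hcont : ∀ j ∈ F.erase i, Continuous (uncurry fun a b => q i j a b * W j) :=
    fun j _ => (hA2.q_cont i j).mul continuous_const
  have hpoint : ∀ a b, ∑ j ∈ F.erase i, q i j a b * W j ≤ C := fun a b =>
    (sum_erase_le_tsum_sub (hA1.summable_mul_W i a b)
      (fun j hj => mul_nonneg (hrate.off_nonneg i j a b hj) (hA1.W_pos j).le) F).trans
      (hC ⟨(a, b), rfl⟩)
  calc ∑ j ∈ F.erase i, qT q i j μ ν * W j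
      = mixedExt (fun a b => ∑ j ∈ F.erase i, q i j a b * W j) μ ν := by
        rw [mixedExt_finsetSum _ hcont]
        simp only [mixedExt_mul_const]
        rfl
    _ ≤ C := mixedExt_le_of_le (continuous_finsetSum _ hcont) hpoint μ ν

theorem exists_qT_row_bounds (hrate : RateHyps q qb) (hA1 : A1Hyps q qb N w c W)
    (hA2 : A2Hyps q r W M) {φ : ℕ → ℝ} (hφ : φ ∈ BW W) (i : ℕ) :
    ∃ C, ∀ μ ν, Summable (fun j => qT q i j μ ν * φ j) ∧
      ∑' j, qT q i j μ ν * φ j ∈ Set.Icc (-qb i * φ i) C := by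
  obtain ⟨K, hK, hφK⟩ := exists_le_mul_of_mem_BW hA1.W_pos hφ
  obtain ⟨C, hC⟩ := exists_sum_erase_qT_mul_W_le hrate hA1 hA2 i
  refine ⟨K * C, fun μ ν => summable_mul_and_tsum_mem_Icc
    (fun j hj => mixedExt_nonneg (fun a b => hrate.off_nonneg i j a b hj) μ ν) ⟨?_, ?_⟩
    hφ.1 hφK hK (hC μ ν)⟩
  · exact le_mixedExt_of_le (hA2.q_cont i i) (fun a b => (hrate.diag_mem_Icc i a b).1) μ ν
  · exact mixedExt_le_of_le (hA2.q_cont i i) (fun a b => (hrate.diag_mem_Icc i a b).2) μ ν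

variable [Nonempty U] [Nonempty V]

theorem Iop_eq_Hop (hrate : RateHyps q qb) (hA1 : A1Hyps q qb N w c W) (hA2 : A2Hyps q r W M)
    {α : ℝ} (hα : 0 ≤ α) {φ : ℕ → ℝ} (hφ : φ ∈ BW W) (i : ℕ) :
    Iop q r qb α φ i = (Hop q r φ i + (qb i + 1) * φ i) / (α + qb i + 1) := by
  obtain ⟨C, hC⟩ := exists_qT_row_bounds hrate hA1 hA2 hφ i
  obtain ⟨Cr, hCr⟩ := (isCompact_range (hA2.r_cont i)).bddAbove
  have hγ : 0 < qb i + 1 := by linarith [hrate.qb_nonneg i]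
  have hβ : 0 < α + qb i + 1 := by linarith
  have hbounds : ∀ μ ν,
      rT r i μ ν + ∑' j, qT q i j μ ν * φ j ∈ Set.Icc (-qb i * φ i) (Cr + C) :=
    fun μ ν => by
      have hr0 : 0 ≤ rT r i μ ν := mixedExt_nonneg (fun a b => hA2.r_nonneg i a b) μ ν
      have hrCr : rT r i μ ν ≤ Cr :=
        mixedExt_le_of_le (hA2.r_cont i) (fun a b => hCr ⟨(a, b), rfl⟩) μ ν
      constructor <;> linarith [(hC μ ν).2.1, (hC μ ν).2.2]
  set g : ℝ → ℝ := fun x => (x + (qb i + 1) * φ i) / (α + qb i + 1) with hg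
  have hg_mono : Monotone g := fun x y hxy => div_le_div_of_nonneg_right (by linarith) hβ.le
  calc Iop q r qb α φ i = ⨅ μ, ⨆ ν, g (rT r i μ ν + ∑' j, qT q i j μ ν * φ j) := by
        refine iInf_congr fun μ => iSup_congr fun ν => ?_
        rw [hg, tsum_pT_mul (hC μ ν).1]
        field_simp
        ring
    _ = g (Hop q r φ i) := iInf_iSup_comp_eq hg_mono (by fun_prop) hbounds

theorem Tmap_eq_self_iff (hrate : RateHyps q qb) (hA1 : A1Hyps q qb N w c W)
    (hA2 : A2Hyps q r W M) {ψ₁ ψ₂ : ℕ → ℝ} (hψ : PsiHyps ψ₁ ψ₂ W M) {α : ℝ} (hα : 0 ≤ α)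
    {φ : ℕ → ℝ} (hφ : φ ∈ BW W) (i : ℕ) :
    Tmap q r qb α ψ₁ ψ₂ φ i = φ i ↔ (ψ₂ i ≤ φ i ∧ φ i ≤ ψ₁ i) ∧
      (ψ₂ i < φ i → φ i < ψ₁ i → α * φ i - Hop q r φ i = 0) ∧
      (φ i = ψ₂ i → 0 ≤ α * φ i - Hop q r φ i) ∧ (φ i = ψ₁ i → α * φ i - Hop q r φ i ≤ 0) := by
  have hβ : 0 < α + qb i + 1 := by linarith [hrate.qb_nonneg i]
  have hle : Iop q r qb α φ i ≤ φ i ↔ 0 ≤ α * φ i - Hop q r φ i := by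
    rw [Iop_eq_Hop hrate hA1 hA2 hα hφ i, div_le_iff₀ hβ]
    constructor <;> intro h <;> linarith
  have hge : φ i ≤ Iop q r qb α φ i ↔ α * φ i - Hop q r φ i ≤ 0 := by
    rw [Iop_eq_Hop hrate hA1 hA2 hα hφ i, le_div_iff₀ hβ]
    constructor <;> intro h <;> linarith
  have heq : Iop q r qb α φ i = φ i ↔ α * φ i - Hop q r φ i = 0 := by
    rw [le_antisymm_iff, hle, hge, le_antisymm_iff, and_comm]
  rw [Tmap, min_max_eq_iff (hψ.ψ₂_lt_ψ₁ i), hle, hge, heq]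

end BellmanOperator

/-- A function `φ ∈ B_W(S)` is a fixed point of `T` iff it satisfies the dynamic
programming inequalities with bilateral constraints (3.1). -/
theorem stmt19 {U V : Type} [MetricSpace U] [CompactSpace U] [Nonempty U]
    [MeasurableSpace U] [BorelSpace U]
    [MetricSpace V] [CompactSpace V] [Nonempty V]
    [MeasurableSpace V] [BorelSpace V]
    (q : ℕ → ℕ → U → V → ℝ) (r : ℕ → U → V → ℝ) (qb : ℕ → ℝ)
    (N : ℕ) (w : ℕ → ℕ → ℝ) (c : ℝ) (W : ℕ → ℝ) (M : ℝ) (α : ℝ) (ψ₁ ψ₂ : ℕ → ℝ)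
    (hrate : RateHyps q qb) (hA1 : A1Hyps q qb N w c W)
    (hA2 : A2Hyps q r W M) (hψ : PsiHyps ψ₁ ψ₂ W M) (hα : 0 < α) :
    ∀ φ ∈ BW W,
      ((∀ i, Tmap q r qb α ψ₁ ψ₂ φ i = φ i) ↔ DPI_H q r α ψ₁ ψ₂ φ) := by
  intro φ hφ
  simp only [Tmap_eq_self_iff hrate hA1 hA2 hψ hα.le hφ, DPI_H, forall_and]
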